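/- Consider a 2-reaction mass-action system with s species, reactant exponent matrices giving steady-state polynomials f_i(x) = n_{i1} κ₁ ∏_j x_j^{α_j} + n_{i2} κ₂ ∏_j x_j^{β_j}, where N = (n_{ij}) is the stoichiometric matrix (nonzero), κ₁, κ₂ > 0, and α ≠ β. Then there exists x with all coordinates positive satisfying f_i(x) = 0 for all i, if and only if the second column of N is a negative scalar multiple of the first column. -/
import Mathlib


theorem stmt4 (s : ℕ) (α β : Fin s → ℕ) (hαβ : α ≠ β)
    (N : Fin s → Fin 2 → ℤ) (κ₁ κ₂ : ℝ) (hκ₁ : 0 < κ₁) (hκ₂ : 0 < κ₂)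
    (hcol1 : ∃ i, N i 0 ≠ 0) (hcol2 : ∃ i, N i 1 ≠ 0) :
    (∃ x : Fin s → ℝ, (∀ i, 0 < x i) ∧
        ∀ i, (N i 0 : ℝ) * κ₁ * ∏ j, (x j) ^ (α j)
            + (N i 1 : ℝ) * κ₂ * ∏ j, (x j) ^ (β j) = 0)
      ↔ ∃ lam : ℚ, lam < 0 ∧ ∀ i, (N i 1 : ℚ) = lam * (N i 0 : ℚ) := by
  constructor
  · rintro ⟨x, hx, h⟩
    set A : ℝ := ∏ j, (x j) ^ (α j) with hAdef
    set B : ℝ := ∏ j, (x j) ^ (β j) with hBdef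
    have hA : 0 < A := Finset.prod_pos fun j _ => pow_pos (hx j) _
    have hB : 0 < B := Finset.prod_pos fun j _ => pow_pos (hx j) _
    set r : ℝ := -(κ₁ * A) / (κ₂ * B) with hrdef
    have hr : ∀ i, (N i 1 : ℝ) = r * N i 0 := by
      intro i
      have hi := h i
      rw [hrdef]
      field_simp
      linarith
    obtain ⟨i₀, hi₀⟩ := hcol1
    have hi₀R : (N i₀ 0 : ℝ) ≠ 0 := Int.cast_ne_zero.mpr hi₀
    refine ⟨(N i₀ 1 : ℚ) / (N i₀ 0 : ℚ), ?_, ?_⟩ <;>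
      [skip; intro i] <;>
      [skip; skip]
    · have hlamR : (((N i₀ 1 : ℚ) / (N i₀ 0 : ℚ) : ℚ) : ℝ) = r := by
        push_cast
        rw [hr i₀]
        field_simp
      have hrneg : r < 0 := by
        have : 0 < (κ₁ * A) / (κ₂ * B) := by positivity
        rw [hrdef, neg_div]
        linarith
      have : (((N i₀ 1 : ℚ) / (N i₀ 0 : ℚ) : ℚ) : ℝ) < 0 := by rw [hlamR]; exact hrneg
      exact_mod_cast this
    · have hlamR : (((N i₀ 1 : ℚ) / (N i₀ 0 : ℚ) : ℚ) : ℝ) = r := by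
        push_cast
        rw [hr i₀]
        field_simp
      have : (N i 1 : ℝ) = (((N i₀ 1 : ℚ) / (N i₀ 0 : ℚ) : ℚ) : ℝ) * N i 0 := by
        rw [hlamR]; exact hr i
      exact_mod_cast this
  · rintro ⟨lam, hlam, hN⟩
    obtain ⟨j₀, hj₀⟩ : ∃ j, α j ≠ β j := by
      by_contra hcon
      push_neg at hcon
      exact hαβ (funext hcon)
    set c : ℝ := (-(lam : ℝ)) * κ₂ / κ₁ with hcdef
    have hlamR : (lam : ℝ) < 0 := by exact_mod_cast hlam
    have hc : 0 < c := by
      rw [hcdef]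
      have : 0 < -(lam : ℝ) := by linarith
      positivity
    set d : ℤ := (α j₀ : ℤ) - (β j₀ : ℤ) with hddef
    have hd : d ≠ 0 := by
      rw [hddef]
      intro hcon
      exact hj₀ (by exact_mod_cast sub_eq_zero.mp hcon)
    have hdR : (d : ℝ) ≠ 0 := Int.cast_ne_zero.mpr hd
    set t : ℝ := c ^ ((d : ℝ)⁻¹) with htdef
    have ht : 0 < t := Real.rpow_pos_of_pos hc _
    have htd : t ^ d = c := by
      have h1 : t ^ (d : ℝ) = c := by
        rw [htdef, ← Real.rpow_mul hc.le, inv_mul_cancel₀ hdR, Real.rpow_one]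
      rw [← Real.rpow_intCast t d, h1]
    have htab : t ^ (α j₀) = c * t ^ (β j₀) := by
      have h2 : t ^ d = t ^ (α j₀ : ℤ) / t ^ (β j₀ : ℤ) := by
        rw [hddef, zpow_sub₀ ht.ne']
      rw [htd, zpow_natCast, zpow_natCast] at h2
      field_simp at h2
      linarith [h2]
    have key : κ₁ * t ^ (α j₀) + (lam : ℝ) * (κ₂ * t ^ (β j₀)) = 0 := by
      rw [htab, hcdef]
      field_simp
      ring
    refine ⟨fun j => if j = j₀ then t else 1, fun j => by dsimp; split <;> [exact ht; norm_num], ?_⟩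
    intro i
    have hPA : (∏ j, (if j = j₀ then t else 1) ^ (α j)) = t ^ (α j₀) := by
      rw [Finset.prod_eq_single j₀ (fun b _ hb => by simp [hb]) (by simp)]
      simp
    have hPB : (∏ j, (if j = j₀ then t else 1) ^ (β j)) = t ^ (β j₀) := by
      rw [Finset.prod_eq_single j₀ (fun b _ hb => by simp [hb]) (by simp)]
      simp
    rw [hPA, hPB]
    have hNi : (N i 1 : ℝ) = (lam : ℝ) * N i 0 := by exact_mod_cast hN i
    rw [hNi]
    linear_combination (N i 0 : ℝ) * key
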